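/- Let ℱ be a null field sheet foliation of a spacetime (M,g), (s, l, α♯, n) a null foliation adapted frame for ℱ, and F = (u·κ) α ∧ l♭ a null, force-free solution in this frame, with current density j = *(d*F) given by j♭ = −(u·κ){[α♯(ln(u·κ)) + dl♭(n,α) + ds♭(α♯,s)] l♭ + ds♭(l,α♯) s♭}. Then: (i) j is parallel to the null pregeodesic l if and only if ds♭(l, α♯) = 0; and (ii) if in addition α♯(ln(u·κ)) + dl♭(n,α) + ds♭(α♯,s) = 0, then j = 0 and F is a vacuum solution. Moreover both conditions are independent of the adapted chart and of the frame freedoms l → f l (n → n/f) and s → s + g̃ l, α → α + h l♭. -/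

import Mathlib

noncomputable section

namespace FFE

/-- Points of the chart domain `U_p ⊆ M` of a spacetime, in coordinates
`(x¹,…,x⁴)` (indexed here by `0,…,3`, so `x³ ↦ 2` and `x⁴ ↦ 3`). -/
abbrev Pt : Type := Fin 4 → ℝ

/-- Scalar fields. -/
abbrev Sc : Type := Pt → ℝ

/-- Vector fields, given by their chart components. -/
abbrev Vec : Type := Fin 4 → Sc

/-- Covector fields (1-forms), given by their chart components. -/
abbrev Cov : Type := Fin 4 → Sc

/-- 2-forms, given by their (antisymmetric) chart components. -/
abbrev Form2 : Type := Fin 4 → Fin 4 → Sc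

/-- Partial derivative along the `i`-th coordinate. -/
def pd (i : Fin 4) (f : Sc) : Sc := fun p => fderiv ℝ f p (Pi.single i 1)

/-- Smoothness of a scalar field. -/
def Smooth (f : Sc) : Prop := ContDiff ℝ (⊤ : ℕ∞) f

/-- Directional derivative of a scalar field along a vector field. -/
def act (v : Vec) (f : Sc) : Sc := ∑ i, v i * pd i f

/-- Lie bracket of vector fields. -/
def bracket (v w : Vec) : Vec := fun μ => act v (w μ) - act w (v μ)

/-- Exterior derivative of a 1-form, evaluated on two vector fields:
`dω(v,w) = (∂_μ ω_ν − ∂_ν ω_μ) v^μ w^ν`. -/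
def dOne (ω : Cov) (v w : Vec) : Sc :=
  ∑ μ, ∑ ν, (pd μ (ω ν) - pd ν (ω μ)) * v μ * w ν

/-- `log |f|`. -/
def logabs (f : Sc) : Sc := fun p => Real.log |f p|

/-- A (smooth) Lorentzian metric of signature `(-1,1,1,1)`, given in a chart by its
covariant components `gdown`, contravariant components `ginv`, and volume factor
`vol = √(−det g)`. -/
structure Lorentzian where
  gdown : Fin 4 → Fin 4 → Sc
  ginv : Fin 4 → Fin 4 → Sc
  vol : Sc
  smooth_gdown : ∀ μ ν, Smooth (gdown μ ν)
  smooth_ginv : ∀ μ ν, Smooth (ginv μ ν)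
  smooth_vol : Smooth vol
  symm_gdown : ∀ μ ν, gdown μ ν = gdown ν μ
  symm_ginv : ∀ μ ν, ginv μ ν = ginv ν μ
  inv_gdown : ∀ μ ν p, (∑ ρ, ginv μ ρ p * gdown ρ ν p) = if μ = ν then 1 else 0
  vol_pos : ∀ p, 0 < vol p
  vol_sq : ∀ p, vol p ^ 2 = -Matrix.det (Matrix.of fun μ ν => gdown μ ν p)
  signature : ∀ p, ∃ e : Fin 4 → Fin 4 → ℝ, ∀ i j,
    (∑ μ, ∑ ν, gdown μ ν p * e i μ * e j ν) =
      if i = j then (if i = 0 then -1 else 1) else 0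

namespace Lorentzian

variable (g : Lorentzian)

/-- Lowering an index: `v ↦ v♭`. -/
def flat (v : Vec) : Cov := fun μ => ∑ ν, g.gdown μ ν * v ν

/-- Raising an index: `ω ↦ ω♯`. -/
def sharp (ω : Cov) : Vec := fun μ => ∑ ν, g.ginv μ ν * ω ν

/-- Metric pairing `g(v,w)` of vector fields. -/
def inner (v w : Vec) : Sc := ∑ μ, ∑ ν, g.gdown μ ν * v μ * w ν

/-- Christoffel symbols of the Levi-Civita connection. -/
def christoffel (μ ν ρ : Fin 4) : Sc := fun p =>
  (1 / 2) * ∑ σ, g.ginv μ σ p *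
    (pd ν (g.gdown σ ρ) p + pd ρ (g.gdown σ ν) p - pd σ (g.gdown ν ρ) p)

/-- Covariant derivative `∇_v w` of the Levi-Civita connection. -/
def nabla (v w : Vec) : Vec := fun μ =>
  (∑ ν, v ν * pd ν (w μ)) + ∑ ν, ∑ ρ, g.christoffel μ ν ρ * v ν * w ρ

/-- Divergence `∇_μ X^μ = (1/√(−g)) ∂_μ (√(−g) X^μ)`. -/
def div (v : Vec) : Sc := fun p =>
  (g.vol p)⁻¹ * ∑ μ, pd μ (fun q => g.vol q * v μ q) p

/-- Raising both indices of a 2-form. -/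
def up2 (F : Form2) : Form2 := fun μ ν => ∑ ρ, ∑ σ, g.ginv μ ρ * g.ginv ν σ * F ρ σ

/-- The full contraction `F_{μν} F^{μν}`. -/
def contract2 (F : Form2) : Sc := ∑ μ, ∑ ν, F μ ν * g.up2 F μ ν

/-- The current density vector `j = *(d*F)`, in components
`j^μ = (1/√(−g)) ∂_ν (√(−g) F^{μν})`. -/
def current (F : Form2) : Vec := fun μ => fun p =>
  (g.vol p)⁻¹ * ∑ ν, pd ν (fun q => g.vol q * g.up2 F μ ν q) p

/-- `F` is a null 2-form: `F_{μν}F^{μν} = 0`. -/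
def IsNull (F : Form2) : Prop := g.contract2 F = 0

/-- The force-free condition `i_{j♯} F = 0` for the current `j` of `F`. -/
def ForceFree (F : Form2) : Prop := ∀ ν, (∑ μ, F μ ν * g.current F μ) = 0

end Lorentzian

/-- `dF = 0` for a 2-form. -/
def Closed (F : Form2) : Prop :=
  ∀ μ ν ρ, pd μ (F ν ρ) + pd ν (F ρ μ) + pd ρ (F μ ν) = 0

/-- The Levi-Civita alternating symbol. -/
def eps (μ ν ρ σ : Fin 4) : ℝ :=
  Matrix.det (Matrix.of fun i j => if (![μ, ν, ρ, σ] i) = j then (1 : ℝ) else 0)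

/-- Hodge star of a 2-form: `(*F)_{μν} = ½ √(−g) ε_{μνρσ} F^{ρσ}`. -/
def Lorentzian.hodge2 (g : Lorentzian) (F : Form2) : Form2 := fun μ ν => fun p =>
  (1 / 2) * g.vol p * ∑ ρ, ∑ σ, eps μ ν ρ σ * g.up2 F ρ σ p

/-- Exterior derivative of a 2-form (components of the 3-form `dG`). -/
def dTwo (G : Form2) : Fin 4 → Fin 4 → Fin 4 → Sc := fun μ ν ρ =>
  pd μ (G ν ρ) + pd ν (G ρ μ) + pd ρ (G μ ν)

/-- The (scalar density representing the) wedge product of a 3-form with a 1-form. -/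
def wedge31 (J : Fin 4 → Fin 4 → Fin 4 → Sc) (ω : Cov) : Sc := fun p =>
  ∑ μ, ∑ ν, ∑ ρ, ∑ σ, eps μ ν ρ σ * J μ ν ρ p * ω σ p

/-- The chart is adapted to a *null* foliation: on the leaves (the level sets of
`(x³,x⁴)`) the metric is degenerate, i.e. `g³³g⁴⁴ − (g³⁴)² = 0`. -/
def Lorentzian.NullAdapted (g : Lorentzian) : Prop :=
  ∀ p, g.ginv 2 2 p * g.ginv 3 3 p - (g.ginv 2 3 p) ^ 2 = 0

/-- `M^r = g^{r3} g^{34} − g^{33} g^{r4}` (coordinates `x³,x⁴` are indices `2,3`). -/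
def Mvec (g : Lorentzian) : Vec := fun r =>
  g.ginv r 2 * g.ginv 2 3 - g.ginv 2 2 * g.ginv r 3

/-- `N^r = g^{r3} g^{44} − g^{34} g^{r4}`. -/
def Nvec (g : Lorentzian) : Vec := fun r =>
  g.ginv r 2 * g.ginv 3 3 - g.ginv 2 3 * g.ginv r 3

/-- A null foliation adapted frame `(s, l, α♯, n)`: `l, n` null, `s, α♯` unit
spacelike, `g(n,l) = −1`, all other frame inner products zero, spanning `TM`. -/
structure Frame (g : Lorentzian) (s l a n : Vec) : Prop where
  smooth_s : ∀ μ, Smooth (s μ)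
  smooth_l : ∀ μ, Smooth (l μ)
  smooth_a : ∀ μ, Smooth (a μ)
  smooth_n : ∀ μ, Smooth (n μ)
  l_null : g.inner l l = 0
  n_null : g.inner n n = 0
  s_unit : g.inner s s = 1
  a_unit : g.inner a a = 1
  n_l : g.inner n l = -1
  n_s : g.inner n s = 0
  n_a : g.inner n a = 0
  l_s : g.inner l s = 0
  l_a : g.inner l a = 0
  s_a : g.inner s a = 0
  spans : ∀ (p : Pt) (v : Fin 4 → ℝ), ∃ c : Fin 4 → ℝ,
    ∀ μ, v μ = c 0 * s μ p + c 1 * l μ p + c 2 * a μ p + c 3 * n μ p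

/-- `l` is a pregeodesic vector field: `∇_l l` is everywhere proportional to `l`. -/
def Pregeodesic (g : Lorentzian) (l : Vec) : Prop :=
  ∃ f : Sc, g.nabla l l = fun μ => f * l μ

/-- The null expansion scalar `θ = ½[g(∇_s l, s) + g(∇_{α♯} l, α♯)]`. -/
def theta (g : Lorentzian) (l s a : Vec) : Sc :=
  (1 / 2 : Sc) * (g.inner (g.nabla s l) s + g.inner (g.nabla a l) a)

/-- The foliation admits an equipartition of null mean curvature w.r.t. `l`:
`θ = g(∇_s l, s)`. -/
def Equipartition (g : Lorentzian) (l s a : Vec) : Prop :=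
  theta g l s a = g.inner (g.nabla s l) s

/-- `l` admits a uniform equipartition of null mean curvature:
`g(∇_s l, α♯) + g(∇_{α♯} l, s) = 0`. -/
def UniformEquipartition (g : Lorentzian) (l s a : Vec) : Prop :=
  g.inner (g.nabla s l) a + g.inner (g.nabla a l) s = 0

/-- `v` lies in the kernel of the 2-form `F`. -/
def InKernel (F : Form2) (v : Vec) : Prop := ∀ μ, (∑ ν, F μ ν * v ν) = 0

/-- The kernel of `F` consists at each point exactly of the vectors tangent to the
leaves of the adapted chart (those with vanishing `x³`- and `x⁴`-components). -/
def KernelExact (F : Form2) : Prop :=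
  ∀ (p : Pt) (v : Fin 4 → ℝ),
    (∀ μ, (∑ ν, F μ ν p * v ν) = 0) ↔ (v 2 = 0 ∧ v 3 = 0)

/-- The kernel of `F` is at each point exactly the span of `v` and `w`. -/
def KernelSpan (F : Form2) (v w : Vec) : Prop :=
  ∀ (p : Pt) (x : Fin 4 → ℝ),
    (∀ μ, (∑ ν, F μ ν p * x ν) = 0) ↔ ∃ c d : ℝ, ∀ μ, x μ = c * v μ p + d * w μ p

/-- `u` is a function of `(x³,x⁴)` alone (constant along the leaves). -/
def LeafConstant (u : Sc) : Prop := pd 0 u = 0 ∧ pd 1 u = 0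

/-- The 2-form `F = u dx³ ∧ dx⁴`. -/
def chartF (u : Sc) : Form2 := fun μ ν =>
  u * ((if μ = 2 ∧ ν = 3 then (1 : Sc) else 0) - if μ = 3 ∧ ν = 2 then (1 : Sc) else 0)

/-- The transition factor `κ = (α₃ l♭₄ − α₄ l♭₃)⁻¹`. -/
def kappa (g : Lorentzian) (a l : Vec) : Sc :=
  (g.flat a 2 * g.flat l 3 - g.flat a 3 * g.flat l 2)⁻¹

/-- The 2-form `F = (u·κ) α ∧ l♭` (with `α = a♭`). -/
def frameF (g : Lorentzian) (a l : Vec) (u : Sc) : Form2 := fun μ ν =>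
  u * kappa g a l * (g.flat a μ * g.flat l ν - g.flat a ν * g.flat l μ)

end FFE

namespace FFE

/-- Condition for the current to be along `l`: `ds♭(l, α♯) = 0`. -/
def cond1 (g : Lorentzian) (s l a : Vec) : Prop := dOne (g.flat s) l a = 0

/-- Vacuum condition: `α♯(ln(u·κ)) + dl♭(n,α♯) + ds♭(α♯,s) = 0`,
for `w = u·κ`. -/
def cond2 (g : Lorentzian) (w : Sc) (s l a n : Vec) : Prop :=
  act a (logabs w) + dOne (g.flat l) n a + dOne (g.flat s) a s = 0



/-! ### Calculus helpers -/

lemma sdiff {f : Sc} (h : Smooth f) : Differentiable ℝ f :=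
  h.differentiable (by simp)

lemma pd_const (i : Fin 4) (c : ℝ) : pd i (fun _ => c) = 0 := by
  funext p; simp [pd]

lemma pd_zero (i : Fin 4) : pd i (0 : Sc) = 0 := pd_const i 0

lemma pd_one (i : Fin 4) : pd i (1 : Sc) = 0 := pd_const i 1

lemma pd_add {F G : Sc} (i : Fin 4) (p : Pt) (hF : DifferentiableAt ℝ F p)
    (hG : DifferentiableAt ℝ G p) :
    pd i (fun q => F q + G q) p = pd i F p + pd i G p := by
  simp [pd, fderiv_fun_add hF hG]

lemma pd_sub {F G : Sc} (i : Fin 4) (p : Pt) (hF : DifferentiableAt ℝ F p)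
    (hG : DifferentiableAt ℝ G p) :
    pd i (fun q => F q - G q) p = pd i F p - pd i G p := by
  simp [pd, fderiv_fun_sub hF hG]

lemma pd_mul {F G : Sc} (i : Fin 4) (p : Pt) (hF : DifferentiableAt ℝ F p)
    (hG : DifferentiableAt ℝ G p) :
    pd i (fun q => F q * G q) p = F p * pd i G p + G p * pd i F p := by
  simp [pd, fderiv_fun_mul hF hG]; try ring

lemma pd_sum {ι : Type*} (s : Finset ι) (F : ι → Sc) (i : Fin 4) (p : Pt)
    (h : ∀ j ∈ s, DifferentiableAt ℝ (F j) p) :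
    pd i (fun q => ∑ j ∈ s, F j q) p = ∑ j ∈ s, pd i (F j) p := by
  simp [pd, fderiv_fun_sum h]

lemma pd_logabs {F : Sc} (i : Fin 4) (p : Pt) (hF : DifferentiableAt ℝ F p)
    (h0 : F p ≠ 0) :
    pd i (logabs F) p = (F p)⁻¹ * pd i F p := by
  have : logabs F = fun q => Real.log (F q) := by
    funext q; simp [logabs, Real.log_abs]
  rw [this]
  have hd := (hF.hasFDerivAt.log h0)
  simp [pd, hd.fderiv]

lemma act_apply (v : Vec) (f : Sc) (p : Pt) :
    act v f p = ∑ i, v i p * pd i f p := by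
  simp [act, Finset.sum_apply]

lemma act_zero (v : Vec) : act v (0 : Sc) = 0 := by
  funext p; simp [act_apply, pd_zero]

lemma act_one (v : Vec) : act v (1 : Sc) = 0 := by
  funext p; simp [act_apply, pd_one]



/-! ### Metric helpers -/

lemma gdown_ginv (g : Lorentzian) (μ ν : Fin 4) (p : Pt) :
    (∑ ρ, g.gdown μ ρ p * g.ginv ρ ν p) = if μ = ν then 1 else 0 := by
  classical
  set A : Matrix (Fin 4) (Fin 4) ℝ := Matrix.of fun i j => g.ginv i j p with hA
  set B : Matrix (Fin 4) (Fin 4) ℝ := Matrix.of fun i j => g.gdown i j p with hB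
  have hAB : A * B = 1 := by
    ext i j
    simp only [Matrix.mul_apply, hA, hB, Matrix.of_apply, Matrix.one_apply]
    exact g.inv_gdown i j p
  have hBA : B * A = 1 := mul_eq_one_comm.mp hAB
  have := congrFun (congrFun hBA μ) ν
  simpa [Matrix.mul_apply, hA, hB, Matrix.one_apply] using this

lemma flat_apply (g : Lorentzian) (X : Vec) (μ : Fin 4) (p : Pt) :
    g.flat X μ p = ∑ ν, g.gdown μ ν p * X ν p := by
  simp [Lorentzian.flat, Finset.sum_apply]

lemma inner_apply (g : Lorentzian) (X Y : Vec) (p : Pt) :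
    g.inner X Y p = ∑ μ, ∑ ν, g.gdown μ ν p * X μ p * Y ν p := by
  simp [Lorentzian.inner, Finset.sum_apply]

lemma smooth_flat (g : Lorentzian) {X : Vec} (hX : ∀ μ, Smooth (X μ)) (μ : Fin 4) :
    Smooth (g.flat X μ) := by
  have : g.flat X μ = fun p => ∑ ν, g.gdown μ ν p * X ν p := by
    funext p; exact flat_apply g X μ p
  rw [this]
  exact ContDiff.sum fun ν _ => (g.smooth_gdown μ ν).mul (hX ν)

lemma pd_flat (g : Lorentzian) {X : Vec} (hX : ∀ μ, Smooth (X μ)) (μ ν : Fin 4) (p : Pt) :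
    pd μ (g.flat X ν) p
      = ∑ ρ, (pd μ (g.gdown ν ρ) p * X ρ p + g.gdown ν ρ p * pd μ (X ρ) p) := by
  have h1 : g.flat X ν = fun q => ∑ ρ, g.gdown ν ρ q * X ρ q := by
    funext q; exact flat_apply g X ν q
  rw [h1, pd_sum Finset.univ (fun ρ => fun q => g.gdown ν ρ q * X ρ q) μ p
    (fun ρ _ => ((sdiff (g.smooth_gdown ν ρ)).mul (sdiff (hX ρ))).differentiableAt)]
  refine Finset.sum_congr rfl fun ρ _ => ?_
  rw [pd_mul μ p (sdiff (g.smooth_gdown ν ρ)).differentiableAt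
    (sdiff (hX ρ)).differentiableAt]
  ring

lemma flat_contract (g : Lorentzian) (X Y : Vec) (p : Pt) :
    (∑ ν, g.flat X ν p * Y ν p) = g.inner Y X p := by
  simp only [flat_apply, inner_apply, Finset.sum_mul, Fin.sum_univ_four]
  ring

lemma flat_inv (g : Lorentzian) (X : Vec) (μ : Fin 4) (p : Pt) :
    (∑ ν, g.ginv μ ν p * g.flat X ν p) = X μ p := by
  have h1 : ∀ ν : Fin 4, g.ginv μ ν p * g.flat X ν p
      = ∑ ρ, g.ginv μ ν p * (g.gdown ν ρ p * X ρ p) := by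
    intro ν; rw [flat_apply, Finset.mul_sum]
  rw [Finset.sum_congr rfl fun ν _ => h1 ν, Finset.sum_comm]
  have h2 : ∀ ρ : Fin 4, (∑ ν, g.ginv μ ν p * (g.gdown ν ρ p * X ρ p))
      = (∑ ν, g.ginv μ ν p * g.gdown ν ρ p) * X ρ p := by
    intro ρ; rw [Finset.sum_mul]; exact Finset.sum_congr rfl fun ν _ => by ring
  rw [Finset.sum_congr rfl fun ρ _ => h2 ρ,
    Finset.sum_congr rfl fun ρ _ => by rw [g.inv_gdown μ ρ p]]
  simp

lemma inner_comm (g : Lorentzian) (X Y : Vec) : g.inner X Y = g.inner Y X := by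
  funext p
  simp only [inner_apply, Fin.sum_univ_four, g.symm_gdown 1 0, g.symm_gdown 2 0,
    g.symm_gdown 2 1, g.symm_gdown 3 0, g.symm_gdown 3 1, g.symm_gdown 3 2]
  ring

lemma gdown_christoffel (g : Lorentzian) (ν ρ σ : Fin 4) (p : Pt) :
    (∑ μ, g.gdown ν μ p * g.christoffel μ ρ σ p)
      = (1 / 2) * (pd ρ (g.gdown ν σ) p + pd σ (g.gdown ν ρ) p
          - pd ν (g.gdown ρ σ) p) := by
  simp only [Lorentzian.christoffel]
  have key : ∀ μ : Fin 4, g.gdown ν μ p *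
      ((1 / 2) * ∑ τ, g.ginv μ τ p * (pd ρ (g.gdown τ σ) p + pd σ (g.gdown τ ρ) p
        - pd τ (g.gdown ρ σ) p))
      = ∑ τ, (g.gdown ν μ p * g.ginv μ τ p) * ((1 / 2) * (pd ρ (g.gdown τ σ) p
          + pd σ (g.gdown τ ρ) p - pd τ (g.gdown ρ σ) p)) := by
    intro μ
    rw [Finset.mul_sum, Finset.mul_sum]
    exact Finset.sum_congr rfl fun τ _ => by ring
  rw [Finset.sum_congr rfl fun μ _ => key μ, Finset.sum_comm]
  have key2 : ∀ τ : Fin 4, (∑ μ, (g.gdown ν μ p * g.ginv μ τ p) * ((1 / 2) *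
      (pd ρ (g.gdown τ σ) p + pd σ (g.gdown τ ρ) p - pd τ (g.gdown ρ σ) p)))
      = (if ν = τ then 1 else 0) * ((1 / 2) * (pd ρ (g.gdown τ σ) p
          + pd σ (g.gdown τ ρ) p - pd τ (g.gdown ρ σ) p)) := by
    intro τ; rw [← Finset.sum_mul, gdown_ginv]
  rw [Finset.sum_congr rfl fun τ _ => key2 τ]
  simp

/-! ### Covariant derivative expansion -/

lemma inner_nabla_apply (g : Lorentzian) (v X w : Vec) (p : Pt) :
    g.inner (g.nabla v X) w p
      = (∑ ν, ∑ ρ, ∑ σ, g.gdown ν σ p * pd ρ (X σ) p * v ρ p * w ν p)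
        + ∑ ν, ∑ ρ, ∑ σ,
            (1 / 2) * (pd ρ (g.gdown ν σ) p + pd σ (g.gdown ν ρ) p
              - pd ν (g.gdown ρ σ) p) * v ρ p * X σ p * w ν p := by
  have gc000 := gdown_christoffel g 0 0 0 p
  have gc001 := gdown_christoffel g 0 0 1 p
  have gc002 := gdown_christoffel g 0 0 2 p
  have gc003 := gdown_christoffel g 0 0 3 p
  have gc010 := gdown_christoffel g 0 1 0 p
  have gc011 := gdown_christoffel g 0 1 1 p
  have gc012 := gdown_christoffel g 0 1 2 p
  have gc013 := gdown_christoffel g 0 1 3 p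
  have gc020 := gdown_christoffel g 0 2 0 p
  have gc021 := gdown_christoffel g 0 2 1 p
  have gc022 := gdown_christoffel g 0 2 2 p
  have gc023 := gdown_christoffel g 0 2 3 p
  have gc030 := gdown_christoffel g 0 3 0 p
  have gc031 := gdown_christoffel g 0 3 1 p
  have gc032 := gdown_christoffel g 0 3 2 p
  have gc033 := gdown_christoffel g 0 3 3 p
  have gc100 := gdown_christoffel g 1 0 0 p
  have gc101 := gdown_christoffel g 1 0 1 p
  have gc102 := gdown_christoffel g 1 0 2 p
  have gc103 := gdown_christoffel g 1 0 3 p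
  have gc110 := gdown_christoffel g 1 1 0 p
  have gc111 := gdown_christoffel g 1 1 1 p
  have gc112 := gdown_christoffel g 1 1 2 p
  have gc113 := gdown_christoffel g 1 1 3 p
  have gc120 := gdown_christoffel g 1 2 0 p
  have gc121 := gdown_christoffel g 1 2 1 p
  have gc122 := gdown_christoffel g 1 2 2 p
  have gc123 := gdown_christoffel g 1 2 3 p
  have gc130 := gdown_christoffel g 1 3 0 p
  have gc131 := gdown_christoffel g 1 3 1 p
  have gc132 := gdown_christoffel g 1 3 2 p
  have gc133 := gdown_christoffel g 1 3 3 p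
  have gc200 := gdown_christoffel g 2 0 0 p
  have gc201 := gdown_christoffel g 2 0 1 p
  have gc202 := gdown_christoffel g 2 0 2 p
  have gc203 := gdown_christoffel g 2 0 3 p
  have gc210 := gdown_christoffel g 2 1 0 p
  have gc211 := gdown_christoffel g 2 1 1 p
  have gc212 := gdown_christoffel g 2 1 2 p
  have gc213 := gdown_christoffel g 2 1 3 p
  have gc220 := gdown_christoffel g 2 2 0 p
  have gc221 := gdown_christoffel g 2 2 1 p
  have gc222 := gdown_christoffel g 2 2 2 p
  have gc223 := gdown_christoffel g 2 2 3 p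
  have gc230 := gdown_christoffel g 2 3 0 p
  have gc231 := gdown_christoffel g 2 3 1 p
  have gc232 := gdown_christoffel g 2 3 2 p
  have gc233 := gdown_christoffel g 2 3 3 p
  have gc300 := gdown_christoffel g 3 0 0 p
  have gc301 := gdown_christoffel g 3 0 1 p
  have gc302 := gdown_christoffel g 3 0 2 p
  have gc303 := gdown_christoffel g 3 0 3 p
  have gc310 := gdown_christoffel g 3 1 0 p
  have gc311 := gdown_christoffel g 3 1 1 p
  have gc312 := gdown_christoffel g 3 1 2 p
  have gc313 := gdown_christoffel g 3 1 3 p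
  have gc320 := gdown_christoffel g 3 2 0 p
  have gc321 := gdown_christoffel g 3 2 1 p
  have gc322 := gdown_christoffel g 3 2 2 p
  have gc323 := gdown_christoffel g 3 2 3 p
  have gc330 := gdown_christoffel g 3 3 0 p
  have gc331 := gdown_christoffel g 3 3 1 p
  have gc332 := gdown_christoffel g 3 3 2 p
  have gc333 := gdown_christoffel g 3 3 3 p
  simp only [Fin.sum_univ_four] at gc000 gc001 gc002 gc003 gc010 gc011 gc012 gc013 gc020 gc021 gc022 gc023 gc030 gc031 gc032 gc033 gc100 gc101 gc102 gc103 gc110 gc111 gc112 gc113 gc120 gc121 gc122 gc123 gc130 gc131 gc132 gc133 gc200 gc201 gc202 gc203 gc210 gc211 gc212 gc213 gc220 gc221 gc222 gc223 gc230 gc231 gc232 gc233 gc300 gc301 gc302 gc303 gc310 gc311 gc312 gc313 gc320 gc321 gc322 gc323 gc330 gc331 gc332 gc333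
  simp only [Lorentzian.inner, Lorentzian.nabla, Finset.sum_apply, Pi.mul_apply,
    Pi.add_apply, Fin.sum_univ_four]
  simp only [g.symm_gdown 1 0, g.symm_gdown 2 0, g.symm_gdown 2 1, g.symm_gdown 3 0,
    g.symm_gdown 3 1, g.symm_gdown 3 2] at gc000 gc001 gc002 gc003 gc010 gc011 gc012 gc013 gc020 gc021 gc022 gc023 gc030 gc031 gc032 gc033 gc100 gc101 gc102 gc103 gc110 gc111 gc112 gc113 gc120 gc121 gc122 gc123 gc130 gc131 gc132 gc133 gc200 gc201 gc202 gc203 gc210 gc211 gc212 gc213 gc220 gc221 gc222 gc223 gc230 gc231 gc232 gc233 gc300 gc301 gc302 gc303 gc310 gc311 gc312 gc313 gc320 gc321 gc322 gc323 gc330 gc331 gc332 gc333 ⊢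
  linear_combination (v 0 p * X 0 p * w 0 p) * gc000 +
    (v 0 p * X 1 p * w 0 p) * gc001 +
    (v 0 p * X 2 p * w 0 p) * gc002 +
    (v 0 p * X 3 p * w 0 p) * gc003 +
    (v 1 p * X 0 p * w 0 p) * gc010 +
    (v 1 p * X 1 p * w 0 p) * gc011 +
    (v 1 p * X 2 p * w 0 p) * gc012 +
    (v 1 p * X 3 p * w 0 p) * gc013 +
    (v 2 p * X 0 p * w 0 p) * gc020 +
    (v 2 p * X 1 p * w 0 p) * gc021 +
    (v 2 p * X 2 p * w 0 p) * gc022 +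
    (v 2 p * X 3 p * w 0 p) * gc023 +
    (v 3 p * X 0 p * w 0 p) * gc030 +
    (v 3 p * X 1 p * w 0 p) * gc031 +
    (v 3 p * X 2 p * w 0 p) * gc032 +
    (v 3 p * X 3 p * w 0 p) * gc033 +
    (v 0 p * X 0 p * w 1 p) * gc100 +
    (v 0 p * X 1 p * w 1 p) * gc101 +
    (v 0 p * X 2 p * w 1 p) * gc102 +
    (v 0 p * X 3 p * w 1 p) * gc103 +
    (v 1 p * X 0 p * w 1 p) * gc110 +
    (v 1 p * X 1 p * w 1 p) * gc111 +
    (v 1 p * X 2 p * w 1 p) * gc112 +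
    (v 1 p * X 3 p * w 1 p) * gc113 +
    (v 2 p * X 0 p * w 1 p) * gc120 +
    (v 2 p * X 1 p * w 1 p) * gc121 +
    (v 2 p * X 2 p * w 1 p) * gc122 +
    (v 2 p * X 3 p * w 1 p) * gc123 +
    (v 3 p * X 0 p * w 1 p) * gc130 +
    (v 3 p * X 1 p * w 1 p) * gc131 +
    (v 3 p * X 2 p * w 1 p) * gc132 +
    (v 3 p * X 3 p * w 1 p) * gc133 +
    (v 0 p * X 0 p * w 2 p) * gc200 +
    (v 0 p * X 1 p * w 2 p) * gc201 +
    (v 0 p * X 2 p * w 2 p) * gc202 +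
    (v 0 p * X 3 p * w 2 p) * gc203 +
    (v 1 p * X 0 p * w 2 p) * gc210 +
    (v 1 p * X 1 p * w 2 p) * gc211 +
    (v 1 p * X 2 p * w 2 p) * gc212 +
    (v 1 p * X 3 p * w 2 p) * gc213 +
    (v 2 p * X 0 p * w 2 p) * gc220 +
    (v 2 p * X 1 p * w 2 p) * gc221 +
    (v 2 p * X 2 p * w 2 p) * gc222 +
    (v 2 p * X 3 p * w 2 p) * gc223 +
    (v 3 p * X 0 p * w 2 p) * gc230 +
    (v 3 p * X 1 p * w 2 p) * gc231 +
    (v 3 p * X 2 p * w 2 p) * gc232 +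
    (v 3 p * X 3 p * w 2 p) * gc233 +
    (v 0 p * X 0 p * w 3 p) * gc300 +
    (v 0 p * X 1 p * w 3 p) * gc301 +
    (v 0 p * X 2 p * w 3 p) * gc302 +
    (v 0 p * X 3 p * w 3 p) * gc303 +
    (v 1 p * X 0 p * w 3 p) * gc310 +
    (v 1 p * X 1 p * w 3 p) * gc311 +
    (v 1 p * X 2 p * w 3 p) * gc312 +
    (v 1 p * X 3 p * w 3 p) * gc313 +
    (v 2 p * X 0 p * w 3 p) * gc320 +
    (v 2 p * X 1 p * w 3 p) * gc321 +
    (v 2 p * X 2 p * w 3 p) * gc322 +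
    (v 2 p * X 3 p * w 3 p) * gc323 +
    (v 3 p * X 0 p * w 3 p) * gc330 +
    (v 3 p * X 1 p * w 3 p) * gc331 +
    (v 3 p * X 2 p * w 3 p) * gc332 +
    (v 3 p * X 3 p * w 3 p) * gc333

lemma dOne_apply (ω : Cov) (v w : Vec) (p : Pt) :
    dOne ω v w p = ∑ μ, ∑ ν, (pd μ (ω ν) p - pd ν (ω μ) p) * v μ p * w ν p := by
  simp [dOne, Finset.sum_apply]

lemma dOne_flat (g : Lorentzian) {X : Vec} (hX : ∀ μ, Smooth (X μ)) (v w : Vec)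
    (p : Pt) :
    dOne (g.flat X) v w p
      = g.inner (g.nabla v X) w p - g.inner (g.nabla w X) v p := by
  rw [inner_nabla_apply, inner_nabla_apply, dOne_apply]
  simp only [pd_flat g hX]
  simp only [Fin.sum_univ_four]
  simp only [g.symm_gdown 1 0, g.symm_gdown 2 0, g.symm_gdown 2 1, g.symm_gdown 3 0,
    g.symm_gdown 3 1, g.symm_gdown 3 2]
  ring

lemma pd_inner (g : Lorentzian) {X Y : Vec} (hX : ∀ μ, Smooth (X μ))
    (hY : ∀ μ, Smooth (Y μ)) (i : Fin 4) (p : Pt) :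
    pd i (g.inner X Y) p
      = ∑ μ, ∑ ν, (pd i (g.gdown μ ν) p * X μ p * Y ν p
          + g.gdown μ ν p * pd i (X μ) p * Y ν p
          + g.gdown μ ν p * X μ p * pd i (Y ν) p) := by
  have h1 : g.inner X Y = fun q => ∑ μ, ∑ ν, g.gdown μ ν q * X μ q * Y ν q := by
    funext q; exact inner_apply g X Y q
  have hd : ∀ μ ν : Fin 4, Differentiable ℝ (fun q => g.gdown μ ν q * X μ q * Y ν q) :=
    fun μ ν => ((sdiff (g.smooth_gdown μ ν)).mul (sdiff (hX μ))).mul (sdiff (hY ν))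
  rw [h1, pd_sum Finset.univ
    (fun μ => fun q => ∑ ν, g.gdown μ ν q * X μ q * Y ν q) i p
    (fun μ _ => (Differentiable.fun_sum (fun ν _ => hd μ ν)).differentiableAt)]
  refine Finset.sum_congr rfl fun μ _ => ?_
  rw [pd_sum Finset.univ (fun ν => fun q => g.gdown μ ν q * X μ q * Y ν q) i p
    (fun ν _ => (hd μ ν).differentiableAt)]
  refine Finset.sum_congr rfl fun ν _ => ?_
  rw [pd_mul (F := fun q => g.gdown μ ν q * X μ q) i p (((sdiff (g.smooth_gdown μ ν)).mul (sdiff (hX μ)))).differentiableAt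
    (sdiff (hY ν)).differentiableAt,
    pd_mul i p (sdiff (g.smooth_gdown μ ν)).differentiableAt (sdiff (hX μ)).differentiableAt]
  ring

lemma compat (g : Lorentzian) (v : Vec) {X Y : Vec} (hX : ∀ μ, Smooth (X μ))
    (hY : ∀ μ, Smooth (Y μ)) (p : Pt) :
    act v (g.inner X Y) p
      = g.inner (g.nabla v X) Y p + g.inner (g.nabla v Y) X p := by
  rw [inner_nabla_apply, inner_nabla_apply, act_apply]
  simp only [pd_inner g hX hY]
  simp only [Fin.sum_univ_four]
  simp only [g.symm_gdown 1 0, g.symm_gdown 2 0, g.symm_gdown 2 1, g.symm_gdown 3 0,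
    g.symm_gdown 3 1, g.symm_gdown 3 2]
  ring

/-! ### Algebraic lemmas for `dOne`, `act`, `flat`, `inner` -/

lemma dOne_swap (ω : Cov) (v w : Vec) (p : Pt) : dOne ω v w p = -dOne ω w v p := by
  simp only [dOne_apply, Fin.sum_univ_four]; ring

lemma dOne_self (ω : Cov) (v : Vec) (p : Pt) : dOne ω v v p = 0 := by
  simp only [dOne_apply, Fin.sum_univ_four]; ring

lemma dOne_left_smul (ω : Cov) (c : Sc) (v w : Vec) (p : Pt) :
    dOne ω (fun μ => c * v μ) w p = c p * dOne ω v w p := by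
  simp only [dOne_apply, Fin.sum_univ_four, Pi.mul_apply]; ring

lemma dOne_right_comb2 (ω : Cov) (v x y : Vec) (c : Sc) (p : Pt) :
    dOne ω v (fun μ => x μ + c * y μ) p = dOne ω v x p + c p * dOne ω v y p := by
  simp only [dOne_apply, Fin.sum_univ_four, Pi.mul_apply, Pi.add_apply]; ring

lemma dOne_left_comb2 (ω : Cov) (x y w : Vec) (c : Sc) (p : Pt) :
    dOne ω (fun μ => x μ + c * y μ) w p = dOne ω x w p + c p * dOne ω y w p := by
  simp only [dOne_apply, Fin.sum_univ_four, Pi.mul_apply, Pi.add_apply]; ring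

lemma dOne_left_comb4 (ω : Cov) (x y z t w : Vec) (c d e : Sc) (p : Pt) :
    dOne ω (fun μ => x μ + c * y μ + d * z μ + e * t μ) w p
      = dOne ω x w p + c p * dOne ω y w p + d p * dOne ω z w p
        + e p * dOne ω t w p := by
  simp only [dOne_apply, Fin.sum_univ_four, Pi.mul_apply, Pi.add_apply]; ring

lemma dOne_form_add {ω η : Cov} (hω : ∀ μ, Smooth (ω μ)) (hη : ∀ μ, Smooth (η μ))
    (v w : Vec) (p : Pt) :
    dOne (fun ν => ω ν + η ν) v w p = dOne ω v w p + dOne η v w p := by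
  simp only [dOne_apply]
  have hpd : ∀ μ ν : Fin 4, pd μ (ω ν + η ν) p = pd μ (ω ν) p + pd μ (η ν) p := by
    intro μ ν
    exact pd_add μ p (sdiff (hω ν)).differentiableAt (sdiff (hη ν)).differentiableAt
  simp only [hpd, Fin.sum_univ_four]; ring

lemma dOne_form_smul {f : Sc} {ω : Cov} (hf : Smooth f) (hω : ∀ μ, Smooth (ω μ))
    (v w : Vec) (p : Pt) :
    dOne (fun ν => f * ω ν) v w p
      = f p * dOne ω v w p + (∑ ν, ω ν p * w ν p) * act v f p
        - (∑ ν, ω ν p * v ν p) * act w f p := by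
  simp only [dOne_apply, act_apply]
  have hpd : ∀ μ ν : Fin 4, pd μ (f * ω ν) p
      = f p * pd μ (ω ν) p + ω ν p * pd μ f p := by
    intro μ ν
    exact pd_mul μ p (sdiff hf).differentiableAt (sdiff (hω ν)).differentiableAt
  simp only [hpd, Fin.sum_univ_four]; ring

lemma act_comb2 (x y : Vec) (c : Sc) (f : Sc) (p : Pt) :
    act (fun μ => x μ + c * y μ) f p = act x f p + c p * act y f p := by
  simp only [act_apply, Fin.sum_univ_four, Pi.mul_apply, Pi.add_apply]; ring

lemma act_smul (x : Vec) (c : Sc) (f : Sc) (p : Pt) :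
    act (fun μ => c * x μ) f p = c p * act x f p := by
  simp only [act_apply, Fin.sum_univ_four, Pi.mul_apply]; ring

lemma act_sub {F G : Sc} (v : Vec) (p : Pt) (hF : DifferentiableAt ℝ F p)
    (hG : DifferentiableAt ℝ G p) :
    act v (fun q => F q - G q) p = act v F p - act v G p := by
  simp only [act_apply]
  have : ∀ i : Fin 4, pd i (fun q => F q - G q) p = pd i F p - pd i G p :=
    fun i => pd_sub i p hF hG
  simp only [this, Fin.sum_univ_four]; ring

lemma act_logabs {F : Sc} (v : Vec) (p : Pt) (hF : DifferentiableAt ℝ F p)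
    (h0 : F p ≠ 0) :
    act v (logabs F) p = (F p)⁻¹ * act v F p := by
  simp only [act_apply]
  have : ∀ i : Fin 4, pd i (logabs F) p = (F p)⁻¹ * pd i F p :=
    fun i => pd_logabs i p hF h0
  simp only [this, Fin.sum_univ_four]; ring

lemma flat_smul (g : Lorentzian) (c : Sc) (X : Vec) :
    g.flat (fun μ => c * X μ) = fun ν => c * g.flat X ν := by
  funext ν p
  simp only [flat_apply, Pi.mul_apply, Fin.sum_univ_four]; ring

lemma flat_comb2 (g : Lorentzian) (X Y : Vec) (c : Sc) :
    g.flat (fun μ => X μ + c * Y μ) = fun ν => g.flat X ν + c * g.flat Y ν := by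
  funext ν p
  simp only [flat_apply, Pi.mul_apply, Pi.add_apply, Fin.sum_univ_four]; ring

lemma inner_comb2_left (g : Lorentzian) (x y Z : Vec) (c : Sc) (p : Pt) :
    g.inner (fun μ => x μ + c * y μ) Z p = g.inner x Z p + c p * g.inner y Z p := by
  simp only [inner_apply, Fin.sum_univ_four, Pi.mul_apply, Pi.add_apply]; ring

lemma inner_smul_left (g : Lorentzian) (x Z : Vec) (c : Sc) (p : Pt) :
    g.inner (fun μ => c * x μ) Z p = c p * g.inner x Z p := by
  simp only [inner_apply, Fin.sum_univ_four, Pi.mul_apply]; ring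

/-! ### Nonvanishing of the transition determinant -/

lemma delta_ne (g : Lorentzian) {s l a n : Vec} (hframe : Frame g s l a n)
    (hl2 : l 2 = 0) (hl3 : l 3 = 0) (hs2 : s 2 = 0) (hs3 : s 3 = 0) (p : Pt) :
    g.flat a 2 p * g.flat l 3 p - g.flat a 3 p * g.flat l 2 p ≠ 0 := by
  have hval : ∀ (X Y : Vec), (∑ ν, g.flat X ν p * Y ν p) = g.inner Y X p :=
    fun X Y => flat_contract g X Y p
  have hss := congrFun hframe.s_unit p
  have hll := congrFun hframe.l_null p
  have haa := congrFun hframe.a_unit p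
  have hnl := congrFun hframe.n_l p
  have hns := congrFun hframe.n_s p
  have hna := congrFun hframe.n_a p
  have hls := congrFun hframe.l_s p
  have hla := congrFun hframe.l_a p
  have hsa := congrFun hframe.s_a p
  simp only [Pi.zero_apply, Pi.one_apply, Pi.neg_apply] at hss hll haa hnl hns hna hls hla hsa
  have hsl : g.inner s l p = 0 := by rw [inner_comm]; exact hls
  have hal : g.inner a l p = 0 := by rw [inner_comm]; exact hla
  have key : ∀ (k : Fin 4), k = 2 ∨ k = 3 →
      ∀ μ : Fin 4, (if k = μ then (1:ℝ) else 0)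
        = a k p * g.flat a μ p + (-(n k p)) * g.flat l μ p := by
    intro k hk μ
    set ω : Fin 4 → ℝ := fun μ => (if k = μ then (1:ℝ) else 0)
      - a k p * g.flat a μ p - (-(n k p)) * g.flat l μ p with hω
    have hcontr : ∀ (Y : Vec), (∑ μ, ω μ * Y μ p)
        = Y k p - a k p * g.inner Y a p + n k p * g.inner Y l p := by
      intro Y
      have hd : (∑ μ, (if k = μ then (1:ℝ) else 0) * Y μ p) = Y k p := by
        simp [ite_mul, Finset.sum_ite_eq]
      have h1 : (∑ μ, ω μ * Y μ p)
          = (∑ μ, (if k = μ then (1:ℝ) else 0) * Y μ p)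
            - a k p * (∑ μ, g.flat a μ p * Y μ p)
            + n k p * (∑ μ, g.flat l μ p * Y μ p) := by
        simp only [hω, Fin.sum_univ_four]; ring
      rw [h1, hd, hval a Y, hval l Y]
    have hws : (∑ μ, ω μ * s μ p) = 0 := by
      rw [hcontr s, hsa, hsl]
      rcases hk with h | h <;> rw [h] <;>
        simp [congrFun hs2 p, congrFun hs3 p]
    have hwl : (∑ μ, ω μ * l μ p) = 0 := by
      rw [hcontr l, hla, hll]
      rcases hk with h | h <;> rw [h] <;>
        simp [congrFun hl2 p, congrFun hl3 p]
    have hwa : (∑ μ, ω μ * a μ p) = 0 := by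
      rw [hcontr a, haa, hal]; ring
    have hwn : (∑ μ, ω μ * n μ p) = 0 := by
      rw [hcontr n, hna, hnl]; ring
    set vv : Fin 4 → ℝ := Pi.single μ 1 with hvv
    obtain ⟨c, hc⟩ := hframe.spans p vv
    have hsingle : (∑ ν, ω ν * vv ν) = ω μ := by
      simp [hvv, Pi.single_apply, mul_ite, Finset.sum_ite_eq']
    have hexp : (∑ ν, ω ν * vv ν)
        = c 0 * (∑ ν, ω ν * s ν p) + c 1 * (∑ ν, ω ν * l ν p)
          + c 2 * (∑ ν, ω ν * a ν p) + c 3 * (∑ ν, ω ν * n ν p) := by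
      simp only [Fin.sum_univ_four]
      rw [hc 0, hc 1, hc 2, hc 3]; ring
    have hw0 : ω μ = 0 := by
      rw [← hsingle, hexp, hws, hwl, hwa, hwn]; ring
    simp only [hω] at hw0
    linarith [hw0]
  intro h
  have e22 := key 2 (Or.inl rfl) 2
  have e23 := key 2 (Or.inl rfl) 3
  have e32 := key 3 (Or.inr rfl) 2
  have e33 := key 3 (Or.inr rfl) 3
  norm_num at e22 e33
  rw [if_neg (show (2:Fin 4) ≠ 3 by decide)] at e23
  rw [if_neg (show (3:Fin 4) ≠ 2 by decide)] at e32
  have key2 : (1:ℝ) = (a 2 p * (-(n 3 p)) - a 3 p * (-(n 2 p)))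
      * (g.flat a 2 p * g.flat l 3 p - g.flat a 3 p * g.flat l 2 p) := by
    linear_combination e22
      + (a 2 p * g.flat a 2 p + (-(n 2 p)) * g.flat l 2 p) * e33
      - (a 3 p * g.flat a 2 p + (-(n 3 p)) * g.flat l 2 p) * e23
  rw [h, mul_zero] at key2
  exact one_ne_zero key2

/-! ### Smoothness of the field strength factor and the closedness relation -/

lemma smooth_kappa (g : Lorentzian) {s l a n : Vec} (hframe : Frame g s l a n)
    (hl2 : l 2 = 0) (hl3 : l 3 = 0) (hs2 : s 2 = 0) (hs3 : s 3 = 0) :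
    Smooth (kappa g a l) := by
  have hδ : Smooth (fun p => g.flat a 2 p * g.flat l 3 p
      - g.flat a 3 p * g.flat l 2 p) :=
    ((smooth_flat g hframe.smooth_a 2).mul (smooth_flat g hframe.smooth_l 3)).sub
      ((smooth_flat g hframe.smooth_a 3).mul (smooth_flat g hframe.smooth_l 2))
  have h1 : kappa g a l = fun p => (g.flat a 2 p * g.flat l 3 p
      - g.flat a 3 p * g.flat l 2 p)⁻¹ := rfl
  rw [h1]
  exact hδ.inv (fun p => delta_ne g hframe hl2 hl3 hs2 hs3 p)

lemma kappa_ne (g : Lorentzian) {s l a n : Vec} (hframe : Frame g s l a n)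
    (hl2 : l 2 = 0) (hl3 : l 3 = 0) (hs2 : s 2 = 0) (hs3 : s 3 = 0) (p : Pt) :
    kappa g a l p ≠ 0 :=
  inv_ne_zero (delta_ne g hframe hl2 hl3 hs2 hs3 p)

lemma pd_frame {W : Sc} {ω η : Cov} (hW : Smooth W) (hω : ∀ μ, Smooth (ω μ))
    (hη : ∀ μ, Smooth (η μ)) (μ ν ρ : Fin 4) (p : Pt) :
    pd μ (W * (ω ν * η ρ - ω ρ * η ν)) p
      = pd μ W p * (ω ν p * η ρ p - ω ρ p * η ν p)
        + W p * (pd μ (ω ν) p * η ρ p + ω ν p * pd μ (η ρ) p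
          - pd μ (ω ρ) p * η ν p - ω ρ p * pd μ (η ν) p) := by
  have h1 : (W * (ω ν * η ρ - ω ρ * η ν))
      = fun q => W q * (ω ν q * η ρ q - ω ρ q * η ν q) := rfl
  have d1 : DifferentiableAt ℝ (fun q => ω ν q * η ρ q - ω ρ q * η ν q) p :=
    (((sdiff (hω ν)).mul (sdiff (hη ρ))).sub
      ((sdiff (hω ρ)).mul (sdiff (hη ν)))).differentiableAt
  rw [h1, pd_mul μ p (sdiff hW).differentiableAt d1,
    pd_sub (F := fun q => ω ν q * η ρ q) (G := fun q => ω ρ q * η ν q) μ p ((sdiff (hω ν)).mul (sdiff (hη ρ))).differentiableAt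
      ((sdiff (hω ρ)).mul (sdiff (hη ν))).differentiableAt,
    pd_mul μ p (sdiff (hω ν)).differentiableAt (sdiff (hη ρ)).differentiableAt,
    pd_mul μ p (sdiff (hω ρ)).differentiableAt (sdiff (hη ν)).differentiableAt]
  ring

set_option maxHeartbeats 1000000 in
lemma dTwo_term {W : Sc} {ω η : Cov} (hW : Smooth W) (hω : ∀ μ, Smooth (ω μ))
    (hη : ∀ μ, Smooth (η μ)) (A B C : Vec) (p : Pt) :
    (∑ μ, ∑ ν, ∑ ρ, A μ p * B ν p * C ρ p * pd μ (W * (ω ν * η ρ - ω ρ * η ν)) p)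
      = act A W p * ((∑ ν, ω ν p * B ν p) * (∑ ν, η ν p * C ν p)
          - (∑ ν, ω ν p * C ν p) * (∑ ν, η ν p * B ν p))
        + W p * ((∑ μ, ∑ ν, A μ p * B ν p * pd μ (ω ν) p) * (∑ ν, η ν p * C ν p)
          + (∑ ν, ω ν p * B ν p) * (∑ μ, ∑ ν, A μ p * C ν p * pd μ (η ν) p)
          - (∑ μ, ∑ ν, A μ p * C ν p * pd μ (ω ν) p) * (∑ ν, η ν p * B ν p)
          - (∑ ν, ω ν p * C ν p) * (∑ μ, ∑ ν, A μ p * B ν p * pd μ (η ν) p)) := by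
  simp only [pd_frame hW hω hη, act_apply, Fin.sum_univ_four]
  ring

lemma sum3_rot (f : Fin 4 → Fin 4 → Fin 4 → ℝ) :
    (∑ μ, ∑ ν, ∑ ρ, f μ ν ρ) = ∑ ν, ∑ ρ, ∑ μ, f μ ν ρ := by
  rw [Finset.sum_comm]
  exact Finset.sum_congr rfl fun _ _ => Finset.sum_comm

lemma dOne_eq_PP (ω : Cov) (v w : Vec) (p : Pt) :
    dOne ω v w p = (∑ μ, ∑ ν, v μ p * w ν p * pd μ (ω ν) p)
      - (∑ μ, ∑ ν, w μ p * v ν p * pd μ (ω ν) p) := by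
  simp only [dOne_apply, Fin.sum_univ_four]; ring

set_option maxHeartbeats 1000000 in
lemma closed_rel (g : Lorentzian) {s l a n : Vec} (hframe : Frame g s l a n)
    (hl2 : l 2 = 0) (hl3 : l 3 = 0) (hs2 : s 2 = 0) (hs3 : s 3 = 0)
    (u : Sc) (hu : Smooth u) (hclosed : Closed (frameF g a l u)) (p : Pt) :
    act l (u * kappa g a l) p
      = -((u * kappa g a l) p)
          * (dOne (g.flat a) l a p + dOne (g.flat l) n l p) := by
  have hWs : Smooth (u * kappa g a l) :=
    hu.mul (smooth_kappa g hframe hl2 hl3 hs2 hs3)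
  have hωs : ∀ μ, Smooth (g.flat a μ) := smooth_flat g hframe.smooth_a
  have hηs : ∀ μ, Smooth (g.flat l μ) := smooth_flat g hframe.smooth_l
  have hz : ∀ μ ν ρ : Fin 4,
      pd μ (u * kappa g a l * (g.flat a ν * g.flat l ρ - g.flat a ρ * g.flat l ν)) p
      + pd ν (u * kappa g a l * (g.flat a ρ * g.flat l μ - g.flat a μ * g.flat l ρ)) p
      + pd ρ (u * kappa g a l * (g.flat a μ * g.flat l ν - g.flat a ν * g.flat l μ)) p
        = 0 := by
    intro μ ν ρ
    have h0 := congrFun (hclosed μ ν ρ) p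
    simp only [Pi.add_apply, Pi.zero_apply, FFE.frameF] at h0
    exact h0
  have hsum : (∑ μ, ∑ ν, ∑ ρ, l μ p * n ν p * a ρ p *
      (pd μ (u * kappa g a l * (g.flat a ν * g.flat l ρ - g.flat a ρ * g.flat l ν)) p
      + pd ν (u * kappa g a l * (g.flat a ρ * g.flat l μ - g.flat a μ * g.flat l ρ)) p
      + pd ρ (u * kappa g a l * (g.flat a μ * g.flat l ν - g.flat a ν * g.flat l μ)) p))
      = 0 :=
    Finset.sum_eq_zero fun μ _ => Finset.sum_eq_zero fun ν _ =>
      Finset.sum_eq_zero fun ρ _ => by rw [hz μ ν ρ, mul_zero]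
  have hsplit : (∑ μ, ∑ ν, ∑ ρ, l μ p * n ν p * a ρ p *
      (pd μ (u * kappa g a l * (g.flat a ν * g.flat l ρ - g.flat a ρ * g.flat l ν)) p
      + pd ν (u * kappa g a l * (g.flat a ρ * g.flat l μ - g.flat a μ * g.flat l ρ)) p
      + pd ρ (u * kappa g a l * (g.flat a μ * g.flat l ν - g.flat a ν * g.flat l μ)) p))
      = (∑ μ, ∑ ν, ∑ ρ, l μ p * n ν p * a ρ p *
          pd μ (u * kappa g a l * (g.flat a ν * g.flat l ρ - g.flat a ρ * g.flat l ν)) p)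
        + (∑ μ, ∑ ν, ∑ ρ, l μ p * n ν p * a ρ p *
          pd ν (u * kappa g a l * (g.flat a ρ * g.flat l μ - g.flat a μ * g.flat l ρ)) p)
        + (∑ μ, ∑ ν, ∑ ρ, l μ p * n ν p * a ρ p *
          pd ρ (u * kappa g a l * (g.flat a μ * g.flat l ν - g.flat a ν * g.flat l μ)) p) := by
    simp only [mul_add, Finset.sum_add_distrib]
  have rot2 : (∑ μ, ∑ ν, ∑ ρ, l μ p * n ν p * a ρ p *
      pd ν (u * kappa g a l * (g.flat a ρ * g.flat l μ - g.flat a μ * g.flat l ρ)) p)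
      = ∑ μ, ∑ ν, ∑ ρ, n μ p * a ν p * l ρ p *
          pd μ (u * kappa g a l * (g.flat a ν * g.flat l ρ - g.flat a ρ * g.flat l ν)) p := by
    rw [sum3_rot]
    exact Finset.sum_congr rfl fun x _ => Finset.sum_congr rfl fun y _ =>
      Finset.sum_congr rfl fun z _ => by ring
  have rot3 : (∑ μ, ∑ ν, ∑ ρ, l μ p * n ν p * a ρ p *
      pd ρ (u * kappa g a l * (g.flat a μ * g.flat l ν - g.flat a ν * g.flat l μ)) p)
      = ∑ μ, ∑ ν, ∑ ρ, a μ p * l ν p * n ρ p *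
          pd μ (u * kappa g a l * (g.flat a ν * g.flat l ρ - g.flat a ρ * g.flat l ν)) p := by
    rw [sum3_rot, sum3_rot (fun x y z => l z p * n x p * a y p *
      pd y (u * kappa g a l * (g.flat a z * g.flat l x - g.flat a x * g.flat l z)) p)]
    exact Finset.sum_congr rfl fun x _ => Finset.sum_congr rfl fun y _ =>
      Finset.sum_congr rfl fun z _ => by ring
  have e1 := dTwo_term hWs hωs hηs l n a p
  have e2 := dTwo_term hWs hωs hηs n a l p
  have e3 := dTwo_term hWs hωs hηs a l n p
  rw [hsplit, rot2, rot3, e1, e2, e3] at hsum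
  -- contraction values
  have hll := congrFun hframe.l_null p
  have haa := congrFun hframe.a_unit p
  have hnl := congrFun hframe.n_l p
  have hna := congrFun hframe.n_a p
  have hla := congrFun hframe.l_a p
  simp only [Pi.zero_apply, Pi.one_apply, Pi.neg_apply] at hll haa hnl hna hla
  have hal : g.inner a l p = 0 := by rw [inner_comm]; exact hla
  have c1 : (∑ ν, g.flat a ν p * l ν p) = 0 := by rw [flat_contract]; exact hla
  have c2 : (∑ ν, g.flat a ν p * n ν p) = 0 := by rw [flat_contract]; exact hna
  have c3 : (∑ ν, g.flat a ν p * a ν p) = 1 := by rw [flat_contract]; exact haa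
  have c4 : (∑ ν, g.flat l ν p * l ν p) = 0 := by rw [flat_contract]; exact hll
  have c5 : (∑ ν, g.flat l ν p * n ν p) = -1 := by rw [flat_contract]; exact hnl
  have c6 : (∑ ν, g.flat l ν p * a ν p) = 0 := by rw [flat_contract]; exact hal
  rw [c1, c2, c3, c4, c5, c6] at hsum
  rw [dOne_eq_PP (g.flat a) l a p, dOne_eq_PP (g.flat l) n l p]
  linear_combination hsum
/-- Let `ℱ` be a null field sheet foliation with adapted frame
`(s, l, α♯, n)` and `F = (u·κ) α ∧ l♭` a null, force-free solution, whose current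
density `j = *(d*F)` satisfies
`j♭ = −(u·κ){[α♯(ln(u·κ)) + dl♭(n,α) + ds♭(α♯,s)] l♭ + ds♭(l,α♯) s♭}`.  Then:
(i) `j` is parallel to the null pregeodesic `l` iff `ds♭(l,α♯) = 0`;
(ii) if in addition `α♯(ln(u·κ)) + dl♭(n,α) + ds♭(α♯,s) = 0`, then `j = 0` and
`F` is a vacuum solution; and both conditions are independent of the frame
freedoms `l → f l` (`n → n/f`, `κ → κ/f`) and `s → s + g̃ l`, `α → α + h l♭`
(and of the adapted chart, under which `u·κ` is invariant). -/
theorem current_of_null_force_free (g : Lorentzian) (s l a n : Vec)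
    (hframe : Frame g s l a n) (hpre : Pregeodesic g l)
    (hequi : Equipartition g l s a)
    (hl2 : l 2 = 0) (hl3 : l 3 = 0) (hs2 : s 2 = 0) (hs3 : s 3 = 0)
    (u : Sc) (hu : Smooth u) (hleaf : LeafConstant u) (hune : ∀ p, u p ≠ 0)
    (hclosed : Closed (frameF g a l u)) (hnull : g.IsNull (frameF g a l u))
    (hff : g.ForceFree (frameF g a l u))
    (hj : ∀ μ, g.flat (g.current (frameF g a l u)) μ =
      -(u * kappa g a l) *
        ((act a (logabs (u * kappa g a l)) + dOne (g.flat l) n a +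
            dOne (g.flat s) a s) * g.flat l μ +
          dOne (g.flat s) l a * g.flat s μ)) :
    ((∃ c : Sc, g.current (frameF g a l u) = fun μ => c * l μ) ↔
      cond1 g s l a) ∧
    (cond1 g s l a → cond2 g (u * kappa g a l) s l a n →
      g.current (frameF g a l u) = 0) ∧
    (∀ f : Sc, Smooth f → (∀ p, f p ≠ 0) →
      ((cond1 g s (fun μ => f * l μ) a ∧
          cond2 g (u * kappa g a l * f⁻¹) s (fun μ => f * l μ) a
            (fun μ => f⁻¹ * n μ)) ↔
        (cond1 g s l a ∧ cond2 g (u * kappa g a l) s l a n))) ∧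
    (∀ gt h : Sc, Smooth gt → Smooth h →
      ((cond1 g (fun μ => s μ + gt * l μ) l (fun μ => a μ + h * l μ) ∧
          cond2 g (u * kappa g a l) (fun μ => s μ + gt * l μ) l
            (fun μ => a μ + h * l μ)
            (fun μ => n μ + ((gt * gt + h * h) / 2) * l μ + gt * s μ + h * a μ)) ↔
        (cond1 g s l a ∧ cond2 g (u * kappa g a l) s l a n))) ∧
    (∀ D : Sc, Smooth D → (∀ p, D p ≠ 0) → act l D = 0 → act s D = 0 →
      ((cond1 g s l a ∧ cond2 g ((D * u) * (kappa g a l * D⁻¹)) s l a n) ↔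
        (cond1 g s l a ∧ cond2 g (u * kappa g a l) s l a n))) := by

  classical
  obtain ⟨φ, hφ⟩ := hpre
  have hls := hframe.smooth_l
  have hss := hframe.smooth_s
  have has := hframe.smooth_a
  have hns := hframe.smooth_n
  have hκs : Smooth (kappa g a l) := smooth_kappa g hframe hl2 hl3 hs2 hs3
  have hWs : Smooth (u * kappa g a l) := hu.mul hκs
  have hWne : ∀ p, (u * kappa g a l) p ≠ 0 := fun p =>
    mul_ne_zero (hune p) (kappa_ne g hframe hl2 hl3 hs2 hs3 p)
  -- pointwise frame inner products
  have vll : ∀ p, g.inner l l p = 0 := fun p => by simpa using congrFun hframe.l_null p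
  have vss : ∀ p, g.inner s s p = 1 := fun p => by simpa using congrFun hframe.s_unit p
  have vaa : ∀ p, g.inner a a p = 1 := fun p => by simpa using congrFun hframe.a_unit p
  have vnl : ∀ p, g.inner n l p = -1 := fun p => by simpa using congrFun hframe.n_l p
  have vna : ∀ p, g.inner n a p = 0 := fun p => by simpa using congrFun hframe.n_a p
  have vns : ∀ p, g.inner n s p = 0 := fun p => by simpa using congrFun hframe.n_s p
  have vls : ∀ p, g.inner l s p = 0 := fun p => by simpa using congrFun hframe.l_s p
  have vla : ∀ p, g.inner l a p = 0 := fun p => by simpa using congrFun hframe.l_a p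
  have vsa : ∀ p, g.inner s a p = 0 := fun p => by simpa using congrFun hframe.s_a p
  have vsl : ∀ p, g.inner s l p = 0 := fun p => by
    rw [inner_comm]; exact vls p
  have val : ∀ p, g.inner a l p = 0 := fun p => by
    rw [inner_comm]; exact vla p
  have vln : ∀ p, g.inner l n p = -1 := fun p => by
    rw [inner_comm]; exact vnl p
  have vas : ∀ p, g.inner a s p = 0 := fun p => by
    rw [inner_comm]; exact vsa p
  -- compatibility consequences
  have innL : ∀ (v : Vec) p, g.inner (g.nabla v l) l p = 0 := by
    intro v p
    have h := compat g v hls hls p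
    rw [hframe.l_null, act_zero] at h
    simp only [Pi.zero_apply] at h
    linarith
  have innS : ∀ (v : Vec) p, g.inner (g.nabla v s) s p = 0 := by
    intro v p
    have h := compat g v hss hss p
    rw [hframe.s_unit, act_one] at h
    simp only [Pi.zero_apply] at h
    linarith
  have innA : ∀ (v : Vec) p, g.inner (g.nabla v a) a p = 0 := by
    intro v p
    have h := compat g v has has p
    rw [hframe.a_unit, act_one] at h
    simp only [Pi.zero_apply] at h
    linarith
  have hsl0 : g.inner s l = 0 := by rw [inner_comm]; exact hframe.l_s
  have hal0 : g.inner a l = 0 := by rw [inner_comm]; exact hframe.l_a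
  have mix1 : ∀ p, g.inner (g.nabla s s) l p = -(g.inner (g.nabla s l) s p) := by
    intro p
    have h := compat g s hss hls p
    rw [hsl0, act_zero] at h
    simp only [Pi.zero_apply] at h
    linarith
  have mix2 : ∀ p, g.inner (g.nabla a a) l p = -(g.inner (g.nabla a l) a p) := by
    intro p
    have h := compat g a has hls p
    rw [hal0, act_zero] at h
    simp only [Pi.zero_apply] at h
    linarith
  have equi : ∀ p, g.inner (g.nabla a l) a p = g.inner (g.nabla s l) s p := by
    intro p
    have h := congrFun hequi p
    simp only [theta, Pi.mul_apply, Pi.add_apply, Pi.div_apply, Pi.one_apply,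
      Pi.ofNat_apply] at h
    linarith
  -- exterior derivative facts
  have dlla : ∀ p, dOne (g.flat l) l a p = 0 := by
    intro p
    rw [dOne_flat g hls l a p, hφ, inner_smul_left, vla, innL a p]
    ring
  have dlls : ∀ p, dOne (g.flat l) l s p = 0 := by
    intro p
    rw [dOne_flat g hls l s p, hφ, inner_smul_left, vls, innL s p]
    ring
  have dlnl : ∀ p, dOne (g.flat l) n l p = φ p := by
    intro p
    rw [dOne_flat g hls n l p, hφ, inner_smul_left, vln, innL n p]
    ring
  have dsls : ∀ p, dOne (g.flat s) l s p = g.inner (g.nabla s l) s p := by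
    intro p
    rw [dOne_flat g hss l s p, innS l p, mix1 p]
    ring
  have dala : ∀ p, dOne (g.flat a) l a p = g.inner (g.nabla a l) a p := by
    intro p
    rw [dOne_flat g has l a p, innA l p, mix2 p]
    ring
  have hC : ∀ p, act l (logabs (u * kappa g a l)) p + dOne (g.flat l) n l p
      + dOne (g.flat s) l s p = 0 := by
    intro p
    have h1 := act_logabs (F := u * kappa g a l) l p (sdiff hWs).differentiableAt (hWne p)
    have h2 := closed_rel g hframe hl2 hl3 hs2 hs3 u hu hclosed p
    have hcan : ((u * kappa g a l) p)⁻¹ * ((u * kappa g a l) p) = 1 :=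
      inv_mul_cancel₀ (hWne p)
    rw [h1, h2]
    linear_combination (-(dOne (g.flat a) l a p + dOne (g.flat l) n l p)) * hcan
      + dsls p - dala p - equi p
  refine ⟨?_, ?_, ?_, ?_, ?_⟩
  · -- j ∥ l ↔ cond1
    constructor
    · rintro ⟨c, hc⟩
      show dOne (g.flat s) l a = 0
      funext p
      simp only [Pi.zero_apply]
      have hjc := hj
      simp only [hc] at hjc
      have h1 : ∀ μ, c p * g.flat l μ p
          = -(u p * kappa g a l p) *
            ((act a (logabs (u * kappa g a l)) p + dOne (g.flat l) n a p
              + dOne (g.flat s) a s p) * g.flat l μ p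
              + dOne (g.flat s) l a p * g.flat s μ p) := by
        intro μ
        have h0 := congrFun (hjc μ) p
        rw [flat_smul g c l] at h0
        simpa only [Pi.mul_apply, Pi.add_apply, Pi.neg_apply] using h0
      have hv1 : (∑ ν, g.flat l ν p * s ν p) = 0 := by
        rw [flat_contract]; exact vsl p
      have hv2 : (∑ ν, g.flat s ν p * s ν p) = 1 := by
        rw [flat_contract]; exact vss p
      simp only [Fin.sum_univ_four] at hv1 hv2
      have hWB : (u p * kappa g a l p) * dOne (g.flat s) l a p = 0 := by
        linear_combination (s 0 p) * h1 0 + (s 1 p) * h1 1 + (s 2 p) * h1 2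
          + (s 3 p) * h1 3
          - (c p + (u p * kappa g a l p)
              * (act a (logabs (u * kappa g a l)) p + dOne (g.flat l) n a p
                + dOne (g.flat s) a s p)) * hv1
          - ((u p * kappa g a l p) * dOne (g.flat s) l a p) * hv2
      rcases mul_eq_zero.mp hWB with h | h
      · exact absurd h (hWne p)
      · exact h
    · intro hcond
      refine ⟨fun p => -((u * kappa g a l) p)
        * (act a (logabs (u * kappa g a l)) p + dOne (g.flat l) n a p
          + dOne (g.flat s) a s p), ?_⟩
      funext μ p
      simp only [Pi.mul_apply]
      have hB : dOne (g.flat s) l a p = 0 := by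
        have := congrFun hcond p
        simpa using this
      have hinv := flat_inv g (g.current (frameF g a l u)) μ p
      have hinvl := flat_inv g l μ p
      simp only [Fin.sum_univ_four] at hinv hinvl
      have hjv : ∀ ν, g.flat (g.current (frameF g a l u)) ν p
          = -(u p * kappa g a l p) *
            ((act a (logabs (u * kappa g a l)) p + dOne (g.flat l) n a p
              + dOne (g.flat s) a s p) * g.flat l ν p
              + dOne (g.flat s) l a p * g.flat s ν p) := by
        intro ν
        have h0 := congrFun (hj ν) p
        simpa only [Pi.mul_apply, Pi.add_apply, Pi.neg_apply] using h0
      linear_combination (-1 : ℝ) * hinv + (g.ginv μ 0 p) * hjv 0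
        + (g.ginv μ 1 p) * hjv 1 + (g.ginv μ 2 p) * hjv 2 + (g.ginv μ 3 p) * hjv 3
        - ((u p * kappa g a l p)
            * (act a (logabs (u * kappa g a l)) p + dOne (g.flat l) n a p
              + dOne (g.flat s) a s p)) * hinvl
        - ((u p * kappa g a l p)
            * (g.ginv μ 0 p * g.flat s 0 p + g.ginv μ 1 p * g.flat s 1 p
              + g.ginv μ 2 p * g.flat s 2 p + g.ginv μ 3 p * g.flat s 3 p)) * hB
  · -- vacuum
    intro h1 h2
    funext μ p
    simp only [Pi.zero_apply]
    have hB : dOne (g.flat s) l a p = 0 := by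
      have := congrFun h1 p
      simpa using this
    have hA : act a (logabs (u * kappa g a l)) p + dOne (g.flat l) n a p
        + dOne (g.flat s) a s p = 0 := by
      have := congrFun h2 p
      simpa [Pi.add_apply] using this
    have hinv := flat_inv g (g.current (frameF g a l u)) μ p
    have hinvl := flat_inv g l μ p
    simp only [Fin.sum_univ_four] at hinv hinvl
    have hjv : ∀ ν, g.flat (g.current (frameF g a l u)) ν p
        = -(u p * kappa g a l p) *
          ((act a (logabs (u * kappa g a l)) p + dOne (g.flat l) n a p
            + dOne (g.flat s) a s p) * g.flat l ν p
            + dOne (g.flat s) l a p * g.flat s ν p) := by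
      intro ν
      have h0 := congrFun (hj ν) p
      simpa only [Pi.mul_apply, Pi.add_apply, Pi.neg_apply] using h0
    linear_combination (-1 : ℝ) * hinv + (g.ginv μ 0 p) * hjv 0
      + (g.ginv μ 1 p) * hjv 1 + (g.ginv μ 2 p) * hjv 2 + (g.ginv μ 3 p) * hjv 3
      - ((u p * kappa g a l p)
          * (g.ginv μ 0 p * g.flat l 0 p + g.ginv μ 1 p * g.flat l 1 p
            + g.ginv μ 2 p * g.flat l 2 p + g.ginv μ 3 p * g.flat l 3 p)) * hA
      - ((u p * kappa g a l p)
          * (g.ginv μ 0 p * g.flat s 0 p + g.ginv μ 1 p * g.flat s 1 p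
            + g.ginv μ 2 p * g.flat s 2 p + g.ginv μ 3 p * g.flat s 3 p)) * hB
  · -- frame freedom l → f l
    intro f hf hfne
    have hd1 : ∀ p, dOne (g.flat s) (fun μ => f * l μ) a p
        = f p * dOne (g.flat s) l a p := fun p => dOne_left_smul _ f l a p
    refine and_congr ?_ ?_
    · constructor
      · intro h
        funext p
        have h' := congrFun h p
        simp only [Pi.zero_apply] at h' ⊢
        rw [hd1 p] at h'
        rcases mul_eq_zero.mp h' with h'' | h''
        · exact absurd h'' (hfne p)
        · exact h''
      · intro h
        funext p
        have h' := congrFun h p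
        simp only [Pi.zero_apply] at h' ⊢
        rw [hd1 p, h', mul_zero]
    · have h2eq : ∀ p, act a (logabs (u * kappa g a l * f⁻¹)) p
          + dOne (g.flat (fun μ => f * l μ)) (fun μ => f⁻¹ * n μ) a p
          + dOne (g.flat s) a s p
          = act a (logabs (u * kappa g a l)) p + dOne (g.flat l) n a p
            + dOne (g.flat s) a s p := by
        intro p
        have hsplit : logabs (u * kappa g a l * f⁻¹)
            = fun q => logabs (u * kappa g a l) q - logabs f q := by
          funext q
          simp only [logabs, Pi.mul_apply, Pi.inv_apply]
          have hWq : u q * kappa g a l q ≠ 0 := hWne q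
          rw [abs_mul, abs_inv,
            Real.log_mul (abs_ne_zero.mpr hWq)
              (inv_ne_zero (abs_ne_zero.mpr (hfne q))),
            Real.log_inv]
          ring
        have hlW : logabs (u * kappa g a l)
            = fun q => Real.log ((u * kappa g a l) q) := by
          funext q; simp only [logabs, Real.log_abs]
        have hlf : logabs f = fun q => Real.log (f q) := by
          funext q; simp [logabs, Real.log_abs]
        have hda : DifferentiableAt ℝ (logabs (u * kappa g a l)) p := by
          rw [hlW]; exact (sdiff hWs).differentiableAt.log (hWne p)
        have hdf : DifferentiableAt ℝ (logabs f) p := by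
          rw [hlf]; exact (sdiff hf).differentiableAt.log (hfne p)
        rw [hsplit, act_sub a p hda hdf, flat_smul g f l, dOne_left_smul,
          dOne_form_smul hf (smooth_flat g hls), flat_contract g l a p,
          flat_contract g l n p, val p, vnl p,
          act_logabs (F := f) a p (sdiff hf).differentiableAt (hfne p)]
        have hcan : (f p)⁻¹ * f p = 1 := inv_mul_cancel₀ (hfne p)
        simp only [Pi.inv_apply]
        linear_combination (dOne (g.flat l) n a p) * hcan
      constructor
      · intro h
        funext p
        have h' := congrFun h p
        simp only [Pi.add_apply, Pi.zero_apply] at h' ⊢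
        linarith [h2eq p, h']
      · intro h
        funext p
        have h' := congrFun h p
        simp only [Pi.add_apply, Pi.zero_apply] at h' ⊢
        linarith [h2eq p, h']
  · -- frame freedom s → s + g̃ l, α → α + h l♭
    intro gt h hgt hh
    have hsflat := smooth_flat g hss
    have hlflat := smooth_flat g hls
    have hη : ∀ μ, Smooth (gt * g.flat l μ) := fun μ => hgt.mul (hlflat μ)
    have E1 : ∀ p, dOne (g.flat (fun μ => s μ + gt * l μ)) l (fun μ => a μ + h * l μ) p
        = dOne (g.flat s) l a p := by
      intro p
      rw [flat_comb2 g s l gt,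
        dOne_form_add hsflat hη l (fun μ => a μ + h * l μ) p,
        dOne_form_smul hgt hlflat l (fun μ => a μ + h * l μ) p,
        dOne_right_comb2 (g.flat s) l a l h p,
        dOne_right_comb2 (g.flat l) l a l h p,
        flat_contract g l (fun μ => a μ + h * l μ) p, flat_contract g l l p,
        inner_comb2_left g a l l h p, vll p, val p, dlla p]
      simp only [dOne_self]
      ring
    have E2 : ∀ p,
        act (fun μ => a μ + h * l μ) (logabs (u * kappa g a l)) p
          + dOne (g.flat l)
              (fun μ => n μ + ((gt * gt + h * h) / 2) * l μ + gt * s μ + h * a μ)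
              (fun μ => a μ + h * l μ) p
          + dOne (g.flat (fun μ => s μ + gt * l μ)) (fun μ => a μ + h * l μ)
              (fun μ => s μ + gt * l μ) p
        = (act a (logabs (u * kappa g a l)) p + dOne (g.flat l) n a p
            + dOne (g.flat s) a s p) - gt p * dOne (g.flat s) l a p := by
      intro p
      have hT1 : act (fun μ => a μ + h * l μ) (logabs (u * kappa g a l)) p
          = act a (logabs (u * kappa g a l)) p
            + h p * act l (logabs (u * kappa g a l)) p :=
        act_comb2 a l h _ p
      have hT2 : dOne (g.flat l)
          (fun μ => n μ + ((gt * gt + h * h) / 2) * l μ + gt * s μ + h * a μ)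
          (fun μ => a μ + h * l μ) p
          = dOne (g.flat l) n a p + gt p * dOne (g.flat l) s a p
            + h p * dOne (g.flat l) n l p := by
        rw [dOne_right_comb2 (g.flat l)
            (fun μ => n μ + ((gt * gt + h * h) / 2) * l μ + gt * s μ + h * a μ)
            a l h p,
          dOne_left_comb4 (g.flat l) n l s a a ((gt * gt + h * h) / 2) gt h p,
          dOne_left_comb4 (g.flat l) n l s a l ((gt * gt + h * h) / 2) gt h p]
        have h1 : dOne (g.flat l) s l p = 0 := by
          rw [dOne_swap _ _ _ p, dlls p]; ring
        have h2 : dOne (g.flat l) a l p = 0 := by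
          rw [dOne_swap _ _ _ p, dlla p]; ring
        simp only [dOne_self]
        rw [dlla p, h1, h2]
        ring
      have hT3 : dOne (g.flat (fun μ => s μ + gt * l μ)) (fun μ => a μ + h * l μ)
          (fun μ => s μ + gt * l μ) p
          = dOne (g.flat s) a s p + h p * dOne (g.flat s) l s p
            - gt p * dOne (g.flat s) l a p + gt p * dOne (g.flat l) a s p := by
        rw [flat_comb2 g s l gt,
          dOne_form_add hsflat hη (fun μ => a μ + h * l μ)
            (fun μ => s μ + gt * l μ) p,
          dOne_form_smul hgt hlflat (fun μ => a μ + h * l μ)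
            (fun μ => s μ + gt * l μ) p,
          flat_contract g l (fun μ => s μ + gt * l μ) p,
          flat_contract g l (fun μ => a μ + h * l μ) p,
          inner_comb2_left g s l l gt p, inner_comb2_left g a l l h p,
          vll p, vsl p, val p,
          dOne_right_comb2 (g.flat s) (fun μ => a μ + h * l μ) s l gt p,
          dOne_right_comb2 (g.flat l) (fun μ => a μ + h * l μ) s l gt p,
          dOne_left_comb2 (g.flat s) a l s h p, dOne_left_comb2 (g.flat s) a l l h p,
          dOne_left_comb2 (g.flat l) a l s h p, dOne_left_comb2 (g.flat l) a l l h p]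
        have h1 : dOne (g.flat s) a l p = -dOne (g.flat s) l a p := dOne_swap _ _ _ p
        have h3 : dOne (g.flat l) a l p = -dOne (g.flat l) l a p := dOne_swap _ _ _ p
        simp only [dOne_self]
        rw [h1, h3, dlls p, dlla p]
        ring
      rw [hT1, hT2, hT3]
      have hswap : dOne (g.flat l) a s p = -dOne (g.flat l) s a p := dOne_swap _ _ _ p
      have hds : dOne (g.flat s) l s p = dOne (g.flat s) l s p := rfl
      linear_combination (h p) * hC p + (gt p) * hswap
    constructor
    · rintro ⟨h1', h2'⟩
      have hB : cond1 g s l a := by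
        show dOne (g.flat s) l a = 0
        funext p
        have hp := congrFun h1' p
        simp only [Pi.zero_apply] at hp ⊢
        rw [E1 p] at hp
        exact hp
      refine ⟨hB, ?_⟩
      show act a (logabs (u * kappa g a l)) + dOne (g.flat l) n a
        + dOne (g.flat s) a s = 0
      funext p
      have hp := congrFun h2' p
      simp only [Pi.add_apply, Pi.zero_apply] at hp ⊢
      have hBp : dOne (g.flat s) l a p = 0 := by
        have := congrFun hB p
        simpa using this
      have := E2 p
      rw [hBp] at this
      linarith [hp, this]
    · rintro ⟨h1, h2⟩
      have hBp : ∀ p, dOne (g.flat s) l a p = 0 := by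
        intro p
        have := congrFun h1 p
        simpa using this
      constructor
      · show dOne (g.flat (fun μ => s μ + gt * l μ)) l (fun μ => a μ + h * l μ) = 0
        funext p
        simp only [Pi.zero_apply]
        rw [E1 p]
        exact hBp p
      · show act (fun μ => a μ + h * l μ) (logabs (u * kappa g a l))
          + dOne (g.flat l)
              (fun μ => n μ + ((gt * gt + h * h) / 2) * l μ + gt * s μ + h * a μ)
              (fun μ => a μ + h * l μ)
          + dOne (g.flat (fun μ => s μ + gt * l μ)) (fun μ => a μ + h * l μ)
              (fun μ => s μ + gt * l μ) = 0
        funext p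
        have hp := congrFun h2 p
        simp only [Pi.add_apply, Pi.zero_apply] at hp ⊢
        have := E2 p
        rw [hBp p] at this
        linarith [hp, this]
  · -- chart freedom
    intro D hD hDne _ _
    have hWeq : ((D * u) * (kappa g a l * D⁻¹)) = u * kappa g a l := by
      funext p
      simp only [Pi.mul_apply, Pi.inv_apply]
      have hcan : D p * (D p)⁻¹ = 1 := mul_inv_cancel₀ (hDne p)
      linear_combination (u p * kappa g a l p) * hcan
    rw [hWeq]


end FFE
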